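/- arXiv:2303.00437 — 2 statements merged into one kernel-verified Lean document; each statement's English description precedes it below -/
import Mathlib

section
/- Let φ(t, t0) be the state transition matrix of ẋ = A(t)x, let R ≻ 0 and Γ(t) ≻ 0 symmetric. The system is FTS with respect to the ellipsoidal domains Ω₀ = {x : xᵀRx ≤ 1}, Ω_t = {x : xᵀΓ(t)x < 1} if and only if Q(t) := φ(t0, t)ᵀ R φ(t0, t) satisfies Q(t) ≻ Γ(t) for all t ∈ J; moreover Q(t0) = R. -/
/-!
Since `x(t) = φ(t,t0) x0` and `φ(t,t0)` is invertible with inverse `φ(t0,t)`, the image of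
`Ω₀ = {x | xᵀ R x ≤ 1}` at time `t` is the ellipsoid `{y | yᵀ Q(t) y ≤ 1}`. For `Q ≻ 0`, this
ellipsoid lies in `{y | yᵀ Γ y < 1}` iff `yᵀ Γ y < yᵀ Q y` for all `y ≠ 0`: rescaling `y` onto the
boundary `yᵀ Q y = 1` gives one direction, and the other is immediate.
-/

open Matrix Set

variable {ι : Type*} [Fintype ι]

def closedEllipsoid (R : Matrix ι ι ℝ) : Set (ι → ℝ) := {x | x ⬝ᵥ R *ᵥ x ≤ 1}

def openEllipsoid (Γ : Matrix ι ι ℝ) : Set (ι → ℝ) := {x | x ⬝ᵥ Γ *ᵥ x < 1}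

theorem Matrix.dotProduct_mulVec_transpose_mul_mul {α : Type*} [CommSemiring α]
    (N R : Matrix ι ι α) (y : ι → α) :
    y ⬝ᵥ (Nᵀ * R * N) *ᵥ y = (N *ᵥ y) ⬝ᵥ R *ᵥ (N *ᵥ y) := by
  rw [Matrix.mul_assoc, ← mulVec_mulVec, ← mulVec_mulVec, dotProduct_mulVec, vecMul_transpose]

theorem Matrix.smul_dotProduct_mulVec_smul {α : Type*} [CommSemiring α]
    (A : Matrix ι ι α) (c : α) (y : ι → α) :
    (c • y) ⬝ᵥ A *ᵥ (c • y) = c ^ 2 * (y ⬝ᵥ A *ᵥ y) := by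
  simp only [mulVec_smul, smul_dotProduct, dotProduct_smul, smul_eq_mul]
  ring

theorem image_mulVec_closedEllipsoid [DecidableEq ι] {M N : Matrix ι ι ℝ} (hNM : N * M = 1)
    (hMN : M * N = 1) (R : Matrix ι ι ℝ) :
    (M *ᵥ ·) '' closedEllipsoid R = closedEllipsoid (Nᵀ * R * N) := by
  ext y
  simp only [closedEllipsoid, mem_image, mem_ofPred_eq, dotProduct_mulVec_transpose_mul_mul]
  constructor
  · rintro ⟨x, hx, rfl⟩
    rwa [mulVec_mulVec, hNM, one_mulVec]
  · exact fun hy => ⟨N *ᵥ y, hy, by rw [mulVec_mulVec, hMN, one_mulVec]⟩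

theorem Matrix.PosDef.closedEllipsoid_subset_openEllipsoid_iff {Q Γ : Matrix ι ι ℝ}
    (hQ : Q.PosDef) (hΓ : Γ.IsHermitian) :
    closedEllipsoid Q ⊆ openEllipsoid Γ ↔ (Q - Γ).PosDef := by
  simp only [posDef_iff_dotProduct_mulVec, star_trivial, sub_mulVec, dotProduct_sub, sub_pos,
    hQ.isHermitian.sub hΓ, true_and]
  constructor
  · intro hsub y hy
    have hq : 0 < y ⬝ᵥ Q *ᵥ y := by simpa using hQ.dotProduct_mulVec_pos hy
    set c := (√(y ⬝ᵥ Q *ᵥ y))⁻¹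
    have hc : c ^ 2 * (y ⬝ᵥ Q *ᵥ y) = 1 := by
      rw [inv_pow, Real.sq_sqrt hq.le, inv_mul_cancel₀ hq.ne']
    have hlt := hsub (a := c • y) (by
      rw [closedEllipsoid, mem_ofPred_eq, smul_dotProduct_mulVec_smul, hc])
    rw [openEllipsoid, mem_ofPred_eq, smul_dotProduct_mulVec_smul, ← hc] at hlt
    exact lt_of_mul_lt_mul_left hlt (sq_nonneg c)
  · intro hpos y hy
    rcases eq_or_ne y 0 with rfl | hy0
    · simp [openEllipsoid]
    · exact (hpos hy0).trans_le hy

theorem ltv_fts_iff_Q_pos_general {n : ℕ} (t0 T : ℝ)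
    (φ : ℝ → ℝ → Matrix (Fin n) (Fin n) ℝ)
    (hφ0 : φ t0 t0 = 1)
    (hφinv : ∀ t ∈ Set.Icc t0 (t0 + T), φ t0 t * φ t t0 = 1 ∧ φ t t0 * φ t0 t = 1)
    (Γ : ℝ → Matrix (Fin n) (Fin n) ℝ) (R : Matrix (Fin n) (Fin n) ℝ)
    (hΓsymm : ∀ t ∈ Set.Icc t0 (t0 + T), (Γ t).IsSymm)
    (hRpd : R.PosDef) :
    ((∀ x0 : Fin n → ℝ, x0 ⬝ᵥ R.mulVec x0 ≤ 1 →
        ∀ t ∈ Set.Icc t0 (t0 + T),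
          ((φ t t0).mulVec x0) ⬝ᵥ (Γ t).mulVec ((φ t t0).mulVec x0) < 1) ↔
      (∀ t ∈ Set.Icc t0 (t0 + T), ((φ t0 t)ᵀ * R * φ t0 t - Γ t).PosDef)) ∧
    (φ t0 t0)ᵀ * R * φ t0 t0 = R := by
  refine ⟨?_, by simp [hφ0]⟩
  have hfts : ∀ t ∈ Set.Icc t0 (t0 + T),
      MapsTo (φ t t0 *ᵥ ·) (closedEllipsoid R) (openEllipsoid (Γ t)) ↔
        ((φ t0 t)ᵀ * R * φ t0 t - Γ t).PosDef := fun t ht => by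
    obtain ⟨hNM, hMN⟩ := hφinv t ht
    have hQ : ((φ t0 t)ᵀ * R * φ t0 t).PosDef := by
      simpa [conjTranspose_eq_transpose_of_trivial] using
        hRpd.conjTranspose_mul_mul_same (B := φ t0 t)
          (mulVec_injective_of_isUnit (isUnit_iff_exists.mpr ⟨_, hNM, hMN⟩))
    rw [mapsTo_iff_image_subset, image_mulVec_closedEllipsoid hNM hMN]
    exact hQ.closedEllipsoid_subset_openEllipsoid_iff (isHermitian_iff_isSymm.mpr (hΓsymm t ht))
  rw [← forall₂_congr hfts]
  exact ⟨fun h t ht x0 hx0 => h x0 hx0 t ht, fun h x0 hx0 t ht => h t ht hx0⟩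

/-- FTS of the LTV system `ẋ = A(t)x` over ellipsoidal domains is equivalent to
`Q(t) := φ(t0,t)ᵀ R φ(t0,t) ≻ Γ(t)` on `J`; moreover `Q(t0) = R`. -/
theorem ltv_fts_iff_Q_pos {n : ℕ} (t0 T : ℝ) (hT : 0 < T)
    (A : ℝ → Matrix (Fin n) (Fin n) ℝ)
    (hA : ContinuousOn A (Set.Icc t0 (t0 + T)))
    (φ : ℝ → ℝ → Matrix (Fin n) (Fin n) ℝ)
    (hφ0 : φ t0 t0 = 1)
    (hφinv : ∀ t ∈ Set.Icc t0 (t0 + T), φ t0 t * φ t t0 = 1 ∧ φ t t0 * φ t0 t = 1)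
    (hφsol : ∀ t ∈ Set.Icc t0 (t0 + T),
      HasDerivAt (fun u => φ u t0) (A t * φ t t0) t)
    (Γ : ℝ → Matrix (Fin n) (Fin n) ℝ) (R : Matrix (Fin n) (Fin n) ℝ)
    (hΓsymm : ∀ t ∈ Set.Icc t0 (t0 + T), (Γ t).IsSymm)
    (hΓpd : ∀ t ∈ Set.Icc t0 (t0 + T), (Γ t).PosDef)
    (hRsymm : R.IsSymm) (hRpd : R.PosDef) :
    ((∀ x0 : Fin n → ℝ, x0 ⬝ᵥ R.mulVec x0 ≤ 1 →
        ∀ t ∈ Set.Icc t0 (t0 + T),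
          ((φ t t0).mulVec x0) ⬝ᵥ (Γ t).mulVec ((φ t t0).mulVec x0) < 1) ↔
      (∀ t ∈ Set.Icc t0 (t0 + T), ((φ t0 t)ᵀ * R * φ t0 t - Γ t).PosDef)) ∧
    (φ t0 t0)ᵀ * R * φ t0 t0 = R :=
  ltv_fts_iff_Q_pos_general t0 T φ hφ0 hφinv Γ R hΓsymm hRpd
end

section
/- With k > 0, t0 = 0, T > 0 and r₀ ≤ 1 < 1/k, the system ẋ₁ = −x₁ − x₂ + k(x₁ − x₂)(x₁²+x₂²), ẋ₂ = x₁ − x₂ + k(x₁+x₂)(x₁²+x₂²) is finite-time stable with respect to Ω₀ = {x : ‖x‖² ≤ 1} and Ω_t = {x : 0.8 k μ(t) ‖x‖² < 1}, where μ(t) = r₀² + (1/k − r₀²)e^{2t} with r₀ = 1: every solution with ‖x(0)‖ ≤ 1 satisfies 0.8 k μ(t)‖x(t)‖² < 1 for all t ∈ [0, T]. -/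
/-!
The squared radius `v = x₁² + x₂²` obeys the Bernoulli equation `v' = -2v + 2kv²`, whose nonzero
solutions are `v = 1 / (k + c e^{2t})`. Hence the defect `(k + c e^{2t}) v - 1` satisfies the
linear equation `f' = 2kv f`, so it cannot become positive once it starts nonpositive. With
`c = 1 - k` the defect is `v(0) - 1 ≤ 0` at `t = 0`, and `(k + (1 - k) e^{2t}) v ≤ 1` is
`0.8 k μ(t) v ≤ 0.8 < 1`.
-/

open Set Real

theorem nonpos_of_hasDerivWithinAt_mul_self {f c : ℝ → ℝ} {a b : ℝ}
    (hf : ContinuousOn f (Icc a b))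
    (hf' : ∀ x ∈ Ico a b, HasDerivWithinAt f (c x * f x) (Ici x) x)
    (hc : BddAbove (c '' Ico a b)) (ha : f a ≤ 0) : ∀ ⦃x⦄, x ∈ Icc a b → f x ≤ 0 := by
  obtain ⟨K, hK⟩ := hc
  intro x hx
  refine le_of_forall_pos_le_add fun ε hε => ?_
  -- fence `f` by `ε e^{(K+1)(t-x)}`, which grows strictly faster than `c f` wherever they meet
  set B : ℝ → ℝ := fun t => ε * exp ((K + 1) * (t - x))
  have hB : ∀ t, HasDerivAt B ((K + 1) * B t) t := fun t =>
    (((((hasDerivAt_id t).sub_const x).const_mul (K + 1)).exp).const_mul ε).congr_deriv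
      (by simp only [B, id]; ring)
  have hB_pos : ∀ t, 0 < B t := fun t => by positivity
  have hfence := image_le_of_deriv_right_lt_deriv_boundary hf hf' (ha.trans (hB_pos a).le) hB
    (fun t ht hft => by
      have hct : c t ≤ K := hK ⟨t, ht, rfl⟩
      rw [hft]
      nlinarith [hB_pos t]) hx
  simpa [B] using hfence

theorem hasDerivAt_sq_add_sq_of_planar {x1 x2 : ℝ → ℝ} {k t : ℝ}
    (hx1 : HasDerivAt x1 (-x1 t - x2 t + k * (x1 t - x2 t) * ((x1 t) ^ 2 + (x2 t) ^ 2)) t)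
    (hx2 : HasDerivAt x2 (x1 t - x2 t + k * (x1 t + x2 t) * ((x1 t) ^ 2 + (x2 t) ^ 2)) t) :
    HasDerivAt (fun s => x1 s ^ 2 + x2 s ^ 2)
      (-2 * (x1 t ^ 2 + x2 t ^ 2) + 2 * k * (x1 t ^ 2 + x2 t ^ 2) ^ 2) t :=
  ((hx1.pow 2).add (hx2.pow 2)).congr_deriv (by ring)

theorem hasDerivAt_bernoulli_defect {v : ℝ → ℝ} {k c t : ℝ}
    (hv : HasDerivAt v (-2 * v t + 2 * k * v t ^ 2) t) :
    HasDerivAt (fun s => (k + c * exp (2 * s)) * v s - 1)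
      (2 * k * v t * ((k + c * exp (2 * t)) * v t - 1)) t := by
  have hexp : HasDerivAt (fun s => exp (2 * s)) (exp (2 * t) * 2) t :=
    ((hasDerivAt_id t).const_mul 2).exp.congr_deriv (by simp only [id]; ring)
  exact (((hexp.const_mul c).const_add k).mul hv |>.sub_const 1).congr_deriv (by ring)

theorem planar_system_fts_general (k T : ℝ) (hk : 0 < k)
    (x1 x2 : ℝ → ℝ)
    (hx1 : ∀ t ∈ Set.Icc (0 : ℝ) T, HasDerivAt x1
      (-x1 t - x2 t + k * (x1 t - x2 t) * ((x1 t) ^ 2 + (x2 t) ^ 2)) t)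
    (hx2 : ∀ t ∈ Set.Icc (0 : ℝ) T, HasDerivAt x2
      (x1 t - x2 t + k * (x1 t + x2 t) * ((x1 t) ^ 2 + (x2 t) ^ 2)) t)
    (h0 : (x1 0) ^ 2 + (x2 0) ^ 2 ≤ 1) :
    ∀ t ∈ Set.Icc (0 : ℝ) T,
      0.8 * k * (1 + (1 / k - 1) * Real.exp (2 * t)) *
        ((x1 t) ^ 2 + (x2 t) ^ 2) < 1 := by
  intro t ht
  set v : ℝ → ℝ := fun s => x1 s ^ 2 + x2 s ^ 2
  set f : ℝ → ℝ := fun s => (k + (1 - k) * exp (2 * s)) * v s - 1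
  have hv : ∀ s ∈ Icc 0 T, HasDerivAt v (-2 * v s + 2 * k * v s ^ 2) s := fun s hs =>
    hasDerivAt_sq_add_sq_of_planar (hx1 s hs) (hx2 s hs)
  have hf : ∀ s ∈ Icc 0 T, HasDerivAt f (2 * k * v s * f s) s := fun s hs =>
    hasDerivAt_bernoulli_defect (hv s hs)
  have hrate_bdd : BddAbove ((fun s => 2 * k * v s) '' Ico 0 T) :=
    (isCompact_Icc.bddAbove_image fun s hs =>
      ((hv s hs).continuousAt.const_mul (2 * k)).continuousWithinAt).mono
      (image_mono Ico_subset_Icc_self)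
  have hft : f t ≤ 0 := nonpos_of_hasDerivWithinAt_mul_self
    (fun s hs => (hf s hs).continuousAt.continuousWithinAt)
    (fun s hs => (hf s (Ico_subset_Icc_self hs)).hasDerivWithinAt) hrate_bdd
    (by simpa [f, v] using h0) ht
  have hμ : k * (1 + (1 / k - 1) * exp (2 * t)) = k + (1 - k) * exp (2 * t) := by
    field_simp
  have hv_nonneg : 0 ≤ v t := by positivity
  simp only [f] at hft
  rw [mul_assoc 0.8, hμ]
  linarith

/-- FTS of the planar example system with respect to the unit disk `Ω₀` and the
time-varying circular trajectory domains `Ω_t = {x : 0.8 k μ(t) ‖x‖² < 1}`,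
`μ(t) = 1 + (1/k − 1) e^{2t}`. -/
theorem planar_system_fts (k T : ℝ) (hk : 0 < k) (hk1 : k < 1) (hT : 0 < T)
    (x1 x2 : ℝ → ℝ)
    (hx1 : ∀ t ∈ Set.Icc (0 : ℝ) T, HasDerivAt x1
      (-x1 t - x2 t + k * (x1 t - x2 t) * ((x1 t) ^ 2 + (x2 t) ^ 2)) t)
    (hx2 : ∀ t ∈ Set.Icc (0 : ℝ) T, HasDerivAt x2
      (x1 t - x2 t + k * (x1 t + x2 t) * ((x1 t) ^ 2 + (x2 t) ^ 2)) t)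
    (h0 : (x1 0) ^ 2 + (x2 0) ^ 2 ≤ 1) :
    ∀ t ∈ Set.Icc (0 : ℝ) T,
      0.8 * k * (1 + (1 / k - 1) * Real.exp (2 * t)) *
        ((x1 t) ^ 2 + (x2 t) ^ 2) < 1 :=
  planar_system_fts_general k T hk x1 x2 hx1 hx2 h0
end
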